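/- arXiv:2303.05003 — 3 statements merged into one kernel-verified Lean document; each statement's English description precedes it below -/
import Mathlib

section
/- There exists a constant C > 0 such that for every δ ∈ (0, 1] and every ξ ∈ ℝ, |(1/2)·log((ξ+1)² + δ) − (1/2)·log((ξ−1)² + δ)| ≤ C·(1 + log(1/δ)); that is, the first derivative of the non-quadratic part F_{δ,1} of the regularized logarithmic potential is uniformly bounded by a quantity of order log(1/δ). -/
lemma key_quad (δ a b : ℝ) (hδ : 0 < δ) (hδ1 : δ ≤ 1) (h : (a - b)^2 ≤ 4) :
    a^2 + δ ≤ (10/δ) * (b^2 + δ) := by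
  rw [div_mul_eq_mul_div, le_div_iff₀ hδ]
  have ha : a^2 ≤ 2*b^2 + 8 := by nlinarith [sq_nonneg (a - 2*b)]
  have h1 : δ * a^2 ≤ δ * (2*b^2 + 8) := mul_le_mul_of_nonneg_left ha hδ.le
  have h2 : δ * b^2 ≤ 1 * b^2 := mul_le_mul_of_nonneg_right hδ1 (sq_nonneg b)
  nlinarith [sq_nonneg b]

lemma key_log (δ a b : ℝ) (hδ : 0 < δ) (hδ1 : δ ≤ 1) (h : (a - b)^2 ≤ 4) :
    Real.log (a^2 + δ) - Real.log (b^2 + δ) ≤ Real.log (10/δ) := by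
  have hA : 0 < a^2 + δ := by positivity
  have hB : 0 < b^2 + δ := by positivity
  have hq := Real.log_le_log hA (key_quad δ a b hδ hδ1 h)
  rw [Real.log_mul (by positivity) hB.ne'] at hq
  linarith

/-- the first derivative of the non-quadratic part of the
regularized logarithmic potential is uniformly bounded by `C·(1 + log(1/δ))`
for `δ ∈ (0,1]`. -/
theorem Freg_deriv_log_bound :
    ∃ C : ℝ, 0 < C ∧ ∀ δ : ℝ, δ ∈ Set.Ioc (0:ℝ) 1 → ∀ ξ : ℝ,
      |(1/2) * Real.log ((ξ + 1)^2 + δ) - (1/2) * Real.log ((ξ - 1)^2 + δ)|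
        ≤ C * (1 + Real.log (1/δ)) := by
  refine ⟨9, by norm_num, ?_⟩
  rintro δ ⟨hδ, hδ1⟩ ξ
  have hlog1 : 0 ≤ Real.log (1/δ) :=
    Real.log_nonneg (by rw [le_div_iff₀ hδ]; linarith)
  have hten : Real.log (10/δ) ≤ 9 * (1 + Real.log (1/δ)) := by
    have h10 : Real.log 10 ≤ 9 := by
      have := Real.log_le_sub_one_of_pos (x := 10) (by norm_num)
      linarith
    have : Real.log (10/δ) = Real.log 10 + Real.log (1/δ) := by
      rw [Real.log_div (by norm_num) hδ.ne', Real.log_div one_ne_zero hδ.ne',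
        Real.log_one]
      ring
    rw [this]
    nlinarith
  have h1 : Real.log ((ξ+1)^2 + δ) - Real.log ((ξ-1)^2 + δ) ≤ Real.log (10/δ) :=
    key_log δ (ξ+1) (ξ-1) hδ hδ1 (by ring_nf; norm_num)
  have h2 : Real.log ((ξ-1)^2 + δ) - Real.log ((ξ+1)^2 + δ) ≤ Real.log (10/δ) :=
    key_log δ (ξ-1) (ξ+1) hδ hδ1 (by ring_nf; norm_num)
  rw [abs_le]
  constructor <;> nlinarith
end

section
/- There exists a constant C > 0 such that for every δ ∈ (0, 1] and every ξ ∈ ℝ, −C ≤ F_{δ,1}(ξ) ≤ C·(1 + ξ²), where F_{δ,1} is the non-quadratic part of the regularized logarithmic Flory–Huggins potential; in particular F_{δ,1} is bounded below uniformly in δ ∈ (0,1], so the modified energy is well defined. -/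
/-- The non-quadratic part `F_{δ,1}` of the regularized logarithmic
Flory–Huggins potential (i.e. `F_δ(ξ) + c·ξ²`). -/
noncomputable def FregOne (δ : ℝ) (ξ : ℝ) : ℝ :=
  (1/2) * (ξ + 1) * Real.log ((ξ + 1)^2 + δ)
    + Real.sqrt δ * Real.arctan ((ξ + 1) / Real.sqrt δ) - ξ
  - ((1/2) * (ξ - 1) * Real.log ((ξ - 1)^2 + δ)
    + Real.sqrt δ * Real.arctan ((ξ - 1) / Real.sqrt δ) - ξ)

lemma log_ge_aux (t : ℝ) (ht : 0 < t) : 1 - 1/t ≤ Real.log t := by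
  have h := Real.log_le_sub_one_of_pos (x := t⁻¹) (by positivity)
  rw [Real.log_inv] at h
  have h1 : (1:ℝ)/t = t⁻¹ := one_div t
  linarith

lemma mul_log_ge_aux (t : ℝ) (ht : 0 < t) : -(1/2) ≤ t * Real.log t := by
  set s := Real.sqrt t with hs
  have hs0 : 0 < s := Real.sqrt_pos.mpr ht
  have hts : t = s^2 := (Real.sq_sqrt ht.le).symm
  have hlog : Real.log t = 2 * Real.log s := by
    rw [hts, Real.log_pow]; push_cast; ring
  have h1 : 1 - 1/s ≤ Real.log s := log_ge_aux s hs0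
  have h2 : s - 1 ≤ s * Real.log s := by
    have h3 := mul_le_mul_of_nonneg_left h1 hs0.le
    have h4 : s * (1 - 1/s) = s - 1 := by field_simp
    linarith [h4 ▸ h3]
  have h5 : t * Real.log t = 2 * (s * (s * Real.log s)) := by
    rw [hlog, hts]; ring
  rw [h5]
  nlinarith [mul_le_mul_of_nonneg_left h2 hs0.le, sq_nonneg (s - 1/2)]

/-- Key upper bound: `x · log(x² + δ) ≤ 2x² + 1` for `δ ∈ (0,1]`. -/
lemma keyUB (δ x : ℝ) (hδ : 0 < δ) (hδ1 : δ ≤ 1) :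
    x * Real.log (x^2 + δ) ≤ 2*x^2 + 1 := by
  rcases lt_trichotomy x 0 with hx | hx | hx
  · by_cases hL : 0 ≤ Real.log (x^2 + δ)
    · nlinarith [mul_nonneg (neg_nonneg.mpr hx.le) hL, sq_nonneg x]
    · push_neg at hL
      have hx2 : (0:ℝ) < x^2 := by nlinarith [mul_pos (neg_pos.mpr hx) (neg_pos.mpr hx)]
      have h1 : Real.log (x^2) ≤ Real.log (x^2 + δ) :=
        Real.log_le_log hx2 (by linarith)
      have h2 : Real.log (x^2) = 2 * Real.log (-x) := by
        rw [show x^2 = (-x)^2 by ring, Real.log_pow]; push_cast; ring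
      have h3 := mul_log_ge_aux (-x) (by linarith)
      have h4 := mul_le_mul_of_nonneg_left h1 (neg_nonneg.mpr hx.le)
      nlinarith [sq_nonneg x]
  · simp [hx]
  · have h1 : Real.log (x^2 + δ) ≤ Real.log ((x+1)^2) :=
      Real.log_le_log (by positivity) (by nlinarith)
    have h2 : Real.log ((x+1)^2) = 2 * Real.log (x+1) := by
      rw [Real.log_pow]; push_cast; ring
    have h3 : Real.log (x+1) ≤ x := by
      have := Real.log_le_sub_one_of_pos (x := x+1) (by linarith)
      linarith
    have h4 := mul_le_mul_of_nonneg_left h1 hx.le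
    nlinarith [sq_nonneg x]

lemma FregOne_even (δ ξ : ℝ) : FregOne δ (-ξ) = FregOne δ ξ := by
  unfold FregOne
  have h1 : (-ξ + 1)^2 = (ξ - 1)^2 := by ring
  have h2 : (-ξ - 1)^2 = (ξ + 1)^2 := by ring
  have h3 : (-ξ + 1) / Real.sqrt δ = -((ξ - 1) / Real.sqrt δ) := by ring
  have h4 : (-ξ - 1) / Real.sqrt δ = -((ξ + 1) / Real.sqrt δ) := by ring
  rw [h1, h2, h3, h4, Real.arctan_neg, Real.arctan_neg]
  ring

lemma sqrt_arctan_bound (δ x : ℝ) (hδ : 0 < δ) (hδ1 : δ ≤ 1) :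
    |Real.sqrt δ * Real.arctan x| ≤ 2 := by
  have hs0 : 0 ≤ Real.sqrt δ := Real.sqrt_nonneg δ
  have hs1 : Real.sqrt δ ≤ 1 := by
    rw [show (1:ℝ) = Real.sqrt 1 by simp]
    exact Real.sqrt_le_sqrt hδ1
  have h1 : |Real.arctan x| ≤ 2 := by
    have ha := Real.neg_pi_div_two_lt_arctan x
    have hb := Real.arctan_lt_pi_div_two x
    have hπ := Real.pi_le_four
    rw [abs_le]; constructor <;> linarith
  calc |Real.sqrt δ * Real.arctan x| = Real.sqrt δ * |Real.arctan x| := by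
        rw [abs_mul, abs_of_nonneg hs0]
    _ ≤ 1 * 2 := by
        apply mul_le_mul hs1 h1 (abs_nonneg _) zero_le_one
    _ = 2 := by norm_num

/-- Lower bound for nonnegative `ξ`. -/
lemma lower_aux (δ ξ : ℝ) (hδ : 0 < δ) (hδ1 : δ ≤ 1) (hξ : 0 ≤ ξ) :
    -8 ≤ FregOne δ ξ := by
  have hLa : 0 ≤ Real.log ((ξ+1)^2 + δ) := Real.log_nonneg (by nlinarith)
  have hM : -(1/2) ≤ (1/2)*(ξ+1)*Real.log ((ξ+1)^2 + δ)
      - (1/2)*(ξ-1)*Real.log ((ξ-1)^2 + δ) := by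
    set La := Real.log ((ξ+1)^2 + δ) with hLadef
    set Lb := Real.log ((ξ-1)^2 + δ) with hLbdef
    rcases le_or_gt 0 (ξ - 1) with hb | hb
    · by_cases hLb : Lb ≤ 0
      · nlinarith [mul_nonneg (show (0:ℝ) ≤ ξ+1 by linarith) hLa,
          mul_nonneg hb (neg_nonneg.mpr hLb)]
      · push_neg at hLb
        have hmono : Lb ≤ La :=
          Real.log_le_log (by positivity) (by nlinarith)
        have := mul_le_mul (show ξ-1 ≤ ξ+1 by linarith) hmono hLb.le
          (show (0:ℝ) ≤ ξ+1 by linarith)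
        linarith
    · by_cases hLb : 0 ≤ Lb
      · nlinarith [mul_nonneg (show (0:ℝ) ≤ ξ+1 by linarith) hLa,
          mul_nonneg (show (0:ℝ) ≤ 1-ξ by linarith) hLb]
      · push_neg at hLb
        have hb2 : (0:ℝ) < 1 - ξ := by linarith
        have h1 : Real.log ((ξ-1)^2) ≤ Lb := by
          have : (0:ℝ) < (ξ-1)^2 := by nlinarith
          exact Real.log_le_log this (by linarith)
        have h2 : Real.log ((ξ-1)^2) = 2 * Real.log (1-ξ) := by
          rw [show (ξ-1)^2 = (1-ξ)^2 by ring, Real.log_pow]; push_cast; ring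
        have h3 := mul_log_ge_aux (1-ξ) hb2
        have h4 := mul_le_mul_of_nonneg_left h1 hb2.le
        nlinarith [mul_nonneg (show (0:ℝ) ≤ ξ+1 by linarith) hLa]
  have hA1 := abs_le.mp (sqrt_arctan_bound δ ((ξ+1)/Real.sqrt δ) hδ hδ1)
  have hA2 := abs_le.mp (sqrt_arctan_bound δ ((ξ-1)/Real.sqrt δ) hδ hδ1)
  unfold FregOne
  linarith [hA1.1, hA2.2, hM]

/-- Upper bound for all `ξ`. -/
lemma upper_aux (δ ξ : ℝ) (hδ : 0 < δ) (hδ1 : δ ≤ 1) :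
    FregOne δ ξ ≤ 8 * (1 + ξ^2) := by
  have h1 := keyUB δ (ξ+1) hδ hδ1
  have h2' := keyUB δ (1-ξ) hδ hδ1
  have h2 : (1-ξ) * Real.log ((ξ-1)^2 + δ) ≤ 2*(1-ξ)^2 + 1 := by
    rwa [show (ξ-1)^2 = (1-ξ)^2 by ring]
  have hA1 := abs_le.mp (sqrt_arctan_bound δ ((ξ+1)/Real.sqrt δ) hδ hδ1)
  have hA2 := abs_le.mp (sqrt_arctan_bound δ ((ξ-1)/Real.sqrt δ) hδ hδ1)
  unfold FregOne
  nlinarith [hA1.2, hA2.1, sq_nonneg ξ]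

/-- there exists `C > 0` such that for all `δ ∈ (0,1]` and all
`ξ ∈ ℝ`, `−C ≤ F_{δ,1}(ξ) ≤ C·(1 + ξ²)`. -/
theorem FregOne_bounds :
    ∃ C : ℝ, 0 < C ∧ ∀ δ : ℝ, δ ∈ Set.Ioc (0:ℝ) 1 → ∀ ξ : ℝ,
      -C ≤ FregOne δ ξ ∧ FregOne δ ξ ≤ C * (1 + ξ^2) := by
  refine ⟨8, by norm_num, fun δ hδ ξ => ⟨?_, ?_⟩⟩
  · rcases le_or_gt 0 ξ with hξ | hξ
    · exact lower_aux δ ξ hδ.1 hδ.2 hξ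
    · have := lower_aux δ (-ξ) hδ.1 hδ.2 (by linarith)
      rwa [FregOne_even] at this
  · exact upper_aux δ ξ hδ.1 hδ.2
end

section
/- For every real κ > 0, the piecewise function f : ℝ → ℝ defined by f(ξ) = ξ − 1 if 1 − ξ < −κ, f(ξ) = −(3/κ⁴)(1−ξ)⁵ − (8/κ³)(1−ξ)⁴ − (6/κ²)(1−ξ)³ if −κ ≤ 1 − ξ < 0, and f(ξ) = 0 if 1 − ξ ≥ 0, satisfies: f is monotone nondecreasing, 0 ≤ f(ξ) ≤ max(ξ − 1, 0) for all ξ ∈ ℝ, and f is Lipschitz continuous with constant 2. -/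
/-!
Substituting `u = (ξ - 1)/κ` gives `fkappa κ ξ = κ * quinticRamp u`, where `quinticRamp` is the
`κ = 1` profile: `0` for `u ≤ 0`, `p u = 3u⁵ - 8u⁴ + 6u³` on `[0, 1]` and `u` for `u ≥ 1`.
Since `p' u = u²(15u² - 32u + 18)` lies in `[0, 2]` on `[0, 1]`, both the profile and
`u ↦ 2u - quinticRamp u` are nondecreasing on each piece, hence everywhere; and a function `f`
for which `f` and `x ↦ 2x - f x` are both nondecreasing is `2`-Lipschitz.
The bound `p u ≤ u` on `[0, 1]` comes from `u - p u = u (1 - u)³ (3u + 1)`.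
-/

open Set

/-- The explicit quintic `C²` regularization of the cutoff `ξ ↦ (ξ − 1)⁺`. -/
noncomputable def fkappa (κ : ℝ) (ξ : ℝ) : ℝ :=
  if 1 - ξ < -κ then ξ - 1
  else if 1 - ξ < 0 then
    -(3/κ^4) * (1 - ξ)^5 - (8/κ^3) * (1 - ξ)^4 - (6/κ^2) * (1 - ξ)^3
  else 0

theorem LipschitzWith.of_monotone_of_monotone_mul_sub {f : ℝ → ℝ} {K : NNReal}
    (hf : Monotone f) (hKf : Monotone fun x => K * x - f x) : LipschitzWith K f := by
  refine LipschitzWith.of_le_add_mul K fun x y => ?_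
  rcases le_total x y with hxy | hyx
  · have := hf hxy
    have : 0 ≤ (K : ℝ) * dist x y := by positivity
    linarith
  · have := hKf hyx
    rw [Real.dist_eq, abs_of_nonneg (sub_nonneg.2 hyx)]
    simp only at this
    linarith

theorem Monotone.of_monotoneOn_Iic_Icc_Ici {α β : Type*} [LinearOrder α] [Preorder β]
    {f : α → β} {a b : α} (hab : a ≤ b) (h₁ : MonotoneOn f (Iic a))
    (h₂ : MonotoneOn f (Icc a b)) (h₃ : MonotoneOn f (Ici b)) : Monotone f := by
  refine h₁.Iic_union_Ici ?_
  rw [← Icc_union_Ici_eq_Ici hab]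
  exact h₂.union_right h₃ (isGreatest_Icc hab) isLeast_Ici

noncomputable def quinticRamp (u : ℝ) : ℝ :=
  if 1 < u then u else if 0 < u then 3 * u ^ 5 - 8 * u ^ 4 + 6 * u ^ 3 else 0

theorem quinticRamp_of_nonpos {u : ℝ} (hu : u ≤ 0) : quinticRamp u = 0 := by
  rw [quinticRamp, if_neg (by linarith), if_neg (not_lt.2 hu)]

theorem quinticRamp_of_mem_Icc {u : ℝ} (hu : u ∈ Icc 0 1) :
    quinticRamp u = 3 * u ^ 5 - 8 * u ^ 4 + 6 * u ^ 3 := by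
  rw [quinticRamp, if_neg (not_lt.2 hu.2)]
  split_ifs with h
  · rfl
  · simp [le_antisymm (not_lt.1 h) hu.1]

theorem quinticRamp_of_one_le {u : ℝ} (hu : 1 ≤ u) : quinticRamp u = u := by
  rcases hu.lt_or_eq with hu | rfl
  · exact if_pos hu
  · norm_num [quinticRamp_of_mem_Icc (right_mem_Icc.2 zero_le_one)]

theorem hasDerivAt_quintic (u : ℝ) :
    HasDerivAt (fun u : ℝ => 3 * u ^ 5 - 8 * u ^ 4 + 6 * u ^ 3)
      (15 * u ^ 4 - 32 * u ^ 3 + 18 * u ^ 2) u := by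
  exact ((((hasDerivAt_pow 5 u).const_mul 3).sub ((hasDerivAt_pow 4 u).const_mul 8)).add
    ((hasDerivAt_pow 3 u).const_mul 6)).congr_deriv (by push_cast; ring)

theorem monotone_quinticRamp : Monotone quinticRamp := by
  refine Monotone.of_monotoneOn_Iic_Icc_Ici zero_le_one ?_ ?_ ?_
  · intro u hu v hv _
    rw [quinticRamp_of_nonpos hu, quinticRamp_of_nonpos hv]
  · refine (monotoneOn_of_hasDerivWithinAt_nonneg (convex_Icc 0 1) (by fun_prop)
      (fun u _ => (hasDerivAt_quintic u).hasDerivWithinAt) fun u _ => ?_).congr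
      fun u hu => (quinticRamp_of_mem_Icc hu).symm
    nlinarith [sq_nonneg (u ^ 2 - 16 / 15 * u), sq_nonneg u]
  · intro u hu v hv huv
    rwa [quinticRamp_of_one_le hu, quinticRamp_of_one_le hv]

theorem monotone_two_mul_sub_quinticRamp : Monotone fun u => 2 * u - quinticRamp u := by
  refine Monotone.of_monotoneOn_Iic_Icc_Ici zero_le_one ?_ ?_ ?_
  · intro u hu v hv huv
    simp only [quinticRamp_of_nonpos hu, quinticRamp_of_nonpos hv]
    linarith
  · refine (monotoneOn_of_hasDerivWithinAt_nonneg (convex_Icc 0 1) (by fun_prop)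
      (fun u _ => (((hasDerivAt_id u).const_mul 2).sub (hasDerivAt_quintic u)).hasDerivWithinAt)
      fun u hu => ?_).congr fun u hu => by simp only [quinticRamp_of_mem_Icc hu]; rfl
    rw [interior_Icc] at hu
    obtain ⟨h0, h1⟩ := hu
    nlinarith [sq_nonneg (u - 3 / 5), mul_pos h0 (sub_pos.2 h1), sq_nonneg (u * (1 - u)),
      mul_nonneg (mul_nonneg h0.le h0.le) (sub_pos.2 h1).le]
  · intro u hu v hv huv
    simp only [quinticRamp_of_one_le hu, quinticRamp_of_one_le hv]
    linarith

theorem quinticRamp_nonneg (u : ℝ) : 0 ≤ quinticRamp u := by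
  rcases le_total u 0 with hu | hu
  · rw [quinticRamp_of_nonpos hu]
  · simpa only [quinticRamp_of_nonpos le_rfl] using monotone_quinticRamp hu

theorem quinticRamp_le_max (u : ℝ) : quinticRamp u ≤ max u 0 := by
  rcases le_total u 0 with hu | hu
  · rw [quinticRamp_of_nonpos hu]
    exact le_max_right _ _
  rcases le_total u 1 with hu₁ | hu₁
  · rw [quinticRamp_of_mem_Icc ⟨hu, hu₁⟩, max_eq_left hu]
    have : 0 ≤ u * (1 - u) ^ 3 * (3 * u + 1) := by
      have := sub_nonneg.2 hu₁
      positivity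
    linarith
  · rw [quinticRamp_of_one_le hu₁]
    exact le_max_left _ _

section fkappa

variable {κ : ℝ} (hκ : 0 < κ)
include hκ

theorem fkappa_eq_mul_quinticRamp (ξ : ℝ) : fkappa κ ξ = κ * quinticRamp ((ξ - 1) / κ) := by
  have hκ' := hκ.ne'
  rw [fkappa]
  split_ifs with h₁ h₂
  · rw [quinticRamp_of_one_le ((one_le_div hκ).2 (by linarith))]
    field_simp
  · rw [quinticRamp_of_mem_Icc ⟨div_nonneg (by linarith) hκ.le, (div_le_one hκ).2 (by linarith)⟩]
    field_simp
    ring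
  · rw [quinticRamp_of_nonpos (div_nonpos_of_nonpos_of_nonneg (by linarith) hκ.le), mul_zero]

theorem monotone_fkappa : Monotone (fkappa κ) := by
  intro x y hxy
  rw [fkappa_eq_mul_quinticRamp hκ, fkappa_eq_mul_quinticRamp hκ]
  gcongr
  exact monotone_quinticRamp (by gcongr)

theorem monotone_two_mul_sub_fkappa : Monotone fun ξ => 2 * ξ - fkappa κ ξ := by
  have h : ∀ ξ, 2 * ξ - fkappa κ ξ = κ * (2 * ((ξ - 1) / κ) - quinticRamp ((ξ - 1) / κ)) + 2 := by
    intro ξ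
    rw [fkappa_eq_mul_quinticRamp hκ]
    field_simp
    ring
  intro x y hxy
  simp only [h]
  gcongr κ * ?_ + 2
  exact monotone_two_mul_sub_quinticRamp (by gcongr)

theorem fkappa_nonneg (ξ : ℝ) : 0 ≤ fkappa κ ξ := by
  rw [fkappa_eq_mul_quinticRamp hκ]
  exact mul_nonneg hκ.le (quinticRamp_nonneg _)

theorem fkappa_le_max (ξ : ℝ) : fkappa κ ξ ≤ max (ξ - 1) 0 := by
  rw [fkappa_eq_mul_quinticRamp hκ]
  calc κ * quinticRamp ((ξ - 1) / κ) ≤ κ * max ((ξ - 1) / κ) 0 :=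
        mul_le_mul_of_nonneg_left (quinticRamp_le_max _) hκ.le
    _ = max (ξ - 1) 0 := by rw [mul_max_of_nonneg _ _ hκ.le, mul_div_cancel₀ _ hκ.ne', mul_zero]

end fkappa

/-- for every `κ > 0`, the quintic regularization is monotone
nondecreasing, satisfies `0 ≤ f(ξ) ≤ max(ξ − 1, 0)`, and is Lipschitz with
constant 2. -/
theorem fkappa_properties (κ : ℝ) (hκ : 0 < κ) :
    Monotone (fkappa κ) ∧
    (∀ ξ : ℝ, 0 ≤ fkappa κ ξ ∧ fkappa κ ξ ≤ max (ξ - 1) 0) ∧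
    LipschitzWith 2 (fkappa κ) :=
  ⟨monotone_fkappa hκ, fun ξ => ⟨fkappa_nonneg hκ ξ, fkappa_le_max hκ ξ⟩,
    .of_monotone_of_monotone_mul_sub (monotone_fkappa hκ) (by
      simpa using monotone_two_mul_sub_fkappa hκ)⟩
end
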